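/- arXiv:2303.05825 — 2 statements merged into one kernel-verified Lean document; each statement's English description precedes it below -/
import Mathlib

section
/- For all ε, ε' ∈ ℝ and all real symmetric n×n matrices W, W', one has ‖Φ(ε,W) − Φ(ε',W')‖_F ≤ ‖W − W'‖_F + (√n/2)·|ε − ε'|. In particular, the map (ε,W) ↦ Φ(ε,W) is (globally, hence locally) Lipschitz continuous on ℝ × Sⁿ. -/
/-!
Writing `a = |ε|`, one has `h(ε, t) = max_{c ∈ [0, 1]} (c t - a c² / 2)`, the maximum being
attained. Each function of the family is `1`-Lipschitz in `t` and `1/2`-Lipschitz in `a`, hence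
`h(ε, t) ≤ h(ε', t') + |t - t'| + |ε - ε'| / 2`.

For a `1`-Lipschitz `f`, conjugating by the eigenbases `U`, `V` of `W`, `W'` (which preserves the
Frobenius norm) turns `f[W] - f[W']` and `W - W'` into the matrices with entries
`(f(dᵢ) - f(d'ⱼ)) Xᵢⱼ` and `(dᵢ - d'ⱼ) Xᵢⱼ`, `X = Uᵀ V`; so `‖f[W] - f[W']‖_F ≤ ‖W - W'‖_F`.
Changing `ε` at fixed `W` moves each eigenvalue of `Φ(ε, W)` by at most `|ε - ε'| / 2`, which costs
`√n |ε - ε'| / 2` in Frobenius norm. The triangle inequality combines the two estimates.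
-/

/-- The Huber smoothing function `h(ε,t)`. -/
noncomputable def huber (ε t : ℝ) : ℝ :=
  if ε = 0 then max 0 t
  else if |ε| < t then t - |ε| / 2
  else if 0 ≤ t then t ^ 2 / (2 * |ε|)
  else 0

/-- The smoothed projection `Φ(ε,W) = h(ε,·)[W]`, defined through the primary matrix function
(Mathlib's `Matrix.IsHermitian.cfc`) of a real symmetric matrix `W`. -/
noncomputable def Phi {n : ℕ} (ε : ℝ) {W : Matrix (Fin n) (Fin n) ℝ}
    (hW : W.IsHermitian) : Matrix (Fin n) (Fin n) ℝ :=
  hW.cfc (huber ε)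

noncomputable def frobNorm {n : ℕ} (M : Matrix (Fin n) (Fin n) ℝ) : ℝ :=
  Real.sqrt (∑ i, ∑ j, (M i j) ^ 2)

open Set Matrix

theorem mul_sub_le_huber (ε : ℝ) {c : ℝ} (hc : c ∈ Icc (0 : ℝ) 1) (t : ℝ) :
    c * t - |ε| * c ^ 2 / 2 ≤ huber ε t := by
  obtain ⟨hc0, hc1⟩ := hc
  unfold huber
  split_ifs with hε hlt hnn
  · subst hε
    rcases le_total 0 t with ht | ht
    · simp only [abs_zero, zero_mul, zero_div, sub_zero, max_eq_right ht]
      nlinarith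
    · simp only [abs_zero, zero_mul, zero_div, sub_zero, max_eq_left ht]
      nlinarith
  · nlinarith [mul_nonneg (sub_nonneg.2 hc1) (sub_nonneg.2 hlt.le),
      mul_nonneg (mul_nonneg (sub_nonneg.2 hc1) (sub_nonneg.2 hc1)) (abs_nonneg ε)]
  · have hpos : 0 < 2 * |ε| := by positivity
    rw [le_div_iff₀ hpos]
    nlinarith [sq_nonneg (t - |ε| * c)]
  · nlinarith [abs_nonneg ε]

theorem exists_huber_eq (ε t : ℝ) :
    ∃ c ∈ Icc (0 : ℝ) 1, huber ε t = c * t - |ε| * c ^ 2 / 2 := by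
  unfold huber
  split_ifs with hε hlt hnn
  · subst hε
    rcases le_total 0 t with ht | ht
    · exact ⟨1, by norm_num, by simp [ht]⟩
    · exact ⟨0, by norm_num, by simp [ht]⟩
  · exact ⟨1, by norm_num, by ring⟩
  · have hpos : 0 < |ε| := abs_pos.2 hε
    refine ⟨t / |ε|, ⟨by positivity, (div_le_one hpos).2 (not_lt.1 hlt)⟩, ?_⟩
    field_simp
    ring
  · exact ⟨0, by norm_num, by ring⟩

theorem huber_le_add (ε ε' t t' : ℝ) :
    huber ε t ≤ huber ε' t' + |t - t'| + |ε - ε'| / 2 := by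
  obtain ⟨c, hc, hεt⟩ := exists_huber_eq ε t
  have hε't' := mul_sub_le_huber ε' hc t'
  obtain ⟨hc0, hc1⟩ := hc
  have hslope_t : c * (t - t') ≤ |t - t'| :=
    (mul_le_mul_of_nonneg_left (le_abs_self _) hc0).trans
      (mul_le_of_le_one_left (abs_nonneg _) hc1)
  have hslope_ε : (|ε'| - |ε|) * c ^ 2 ≤ |ε - ε'| := by
    have hc2 : c ^ 2 ≤ 1 := pow_le_one₀ hc0 hc1
    calc (|ε'| - |ε|) * c ^ 2 ≤ |ε - ε'| * c ^ 2 := by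
          gcongr
          rw [abs_sub_comm]
          exact abs_sub_abs_le_abs_sub ε' ε
      _ ≤ |ε - ε'| := mul_le_of_le_one_right (abs_nonneg _) hc2
  linarith

theorem lipschitzWith_huber (ε : ℝ) : LipschitzWith 1 (huber ε) :=
  .of_le_add fun t t' => by simpa [Real.dist_eq] using huber_le_add ε ε t t'

theorem abs_huber_sub_huber_le (ε ε' t : ℝ) : |huber ε t - huber ε' t| ≤ |ε - ε'| / 2 := by
  have h := huber_le_add ε ε' t t
  have h' := huber_le_add ε' ε t t
  rw [abs_sub_comm ε'] at h'
  simp only [sub_self, abs_zero, add_zero] at h h'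
  exact abs_sub_le_iff.2 ⟨by linarith, by linarith⟩

theorem star_mul_conj_sub_conj_mul {R : Type*} [Ring R] [StarRing R] {U V : R}
    (hU : U ∈ unitary R) (hV : V ∈ unitary R) (A B : R) :
    star U * (U * A * star U - V * B * star V) * V = A * (star U * V) - star U * V * B := by
  simp only [mul_sub, sub_mul, ← mul_assoc, Unitary.star_mul_self_of_mem hU, one_mul]
  simp only [mul_assoc, Unitary.star_mul_self_of_mem hV, mul_one]

theorem diagonal_mul_sub_mul_diagonal_apply {ι R : Type*} [Fintype ι] [DecidableEq ι]
    [CommRing R] (a b : ι → R) (X : Matrix ι ι R) (i j : ι) :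
    (diagonal a * X - X * diagonal b) i j = (a i - b j) * X i j := by
  simp only [Matrix.sub_apply, diagonal_mul, mul_diagonal]
  ring

namespace Matrix.IsHermitian

variable {ι : Type*} [Fintype ι] [DecidableEq ι] {W : Matrix ι ι ℝ} (hW : W.IsHermitian)

theorem cfc_eq_mul_diagonal_mul (f : ℝ → ℝ) :
    hW.cfc f = (hW.eigenvectorUnitary : Matrix ι ι ℝ) * diagonal (f ∘ hW.eigenvalues) *
      star (hW.eigenvectorUnitary : Matrix ι ι ℝ) := by
  rw [IsHermitian.cfc, RCLike.ofReal_real_eq_id, Function.id_comp, Unitary.conjStarAlgAut_apply]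

theorem eq_mul_diagonal_mul :
    W = (hW.eigenvectorUnitary : Matrix ι ι ℝ) * diagonal hW.eigenvalues *
      star (hW.eigenvectorUnitary : Matrix ι ι ℝ) := by
  conv_lhs => rw [hW.spectral_theorem, RCLike.ofReal_real_eq_id, Function.id_comp,
    Unitary.conjStarAlgAut_apply]

theorem cfc_sub_cfc (f g : ℝ → ℝ) : hW.cfc f - hW.cfc g = hW.cfc (f - g) := by
  simp only [IsHermitian.cfc, ← map_sub, diagonal_sub]
  rfl

end Matrix.IsHermitian

section Frobenius

variable {n : ℕ}

attribute [local instance] Matrix.frobeniusNormedAddCommGroup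

theorem frobNorm_eq_norm (M : Matrix (Fin n) (Fin n) ℝ) : frobNorm M = ‖M‖ := by
  simp [frobNorm, frobenius_norm_def, Real.sqrt_eq_rpow, sq_abs]

theorem frobNorm_sub_le (A B C : Matrix (Fin n) (Fin n) ℝ) :
    frobNorm (A - C) ≤ frobNorm (A - B) + frobNorm (B - C) := by
  simpa only [frobNorm_eq_norm] using norm_sub_le_norm_sub_add_norm_sub A B C

theorem frobNorm_diagonal (v : Fin n → ℝ) : frobNorm (diagonal v) = √(∑ i, v i ^ 2) := by
  simp [frobNorm_eq_norm, frobenius_norm_diagonal, EuclideanSpace.norm_eq]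

theorem frobNorm_eq_sqrt_trace (M : Matrix (Fin n) (Fin n) ℝ) :
    frobNorm M = √(trace (star M * M)) := by
  simp only [frobNorm, trace, diag, mul_apply, star_apply, star_trivial, sq]
  rw [Finset.sum_comm]

theorem frobNorm_mul_mul_of_mem_unitary {U V : Matrix (Fin n) (Fin n) ℝ}
    (hU : U ∈ unitary _) (hV : V ∈ unitary _) (M : Matrix (Fin n) (Fin n) ℝ) :
    frobNorm (U * M * V) = frobNorm M := by
  have hUMV : star (U * M * V) * (U * M * V) = star V * (star M * M) * V := by
    simp only [star_mul, mul_assoc, ← mul_assoc (star U) U, Unitary.star_mul_self_of_mem hU,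
      one_mul]
  rw [frobNorm_eq_sqrt_trace, frobNorm_eq_sqrt_trace, hUMV, trace_mul_cycle,
    Unitary.mul_star_self_of_mem hV, one_mul]

theorem frobNorm_le_frobNorm_of_abs_le {A B : Matrix (Fin n) (Fin n) ℝ}
    (h : ∀ i j, |A i j| ≤ |B i j|) : frobNorm A ≤ frobNorm B :=
  Real.sqrt_le_sqrt <| Finset.sum_le_sum fun i _ =>
    Finset.sum_le_sum fun j _ => sq_le_sq.2 (h i j)

end Frobenius

section Lipschitz

variable {n : ℕ} {W W' : Matrix (Fin n) (Fin n) ℝ} (hW : W.IsHermitian) (hW' : W'.IsHermitian)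

theorem frobNorm_cfc_sub_cfc_le {f : ℝ → ℝ} (hf : LipschitzWith 1 f) :
    frobNorm (hW.cfc f - hW'.cfc f) ≤ frobNorm (W - W') := by
  set U : Matrix (Fin n) (Fin n) ℝ := (hW.eigenvectorUnitary : Matrix (Fin n) (Fin n) ℝ)
  set V : Matrix (Fin n) (Fin n) ℝ := (hW'.eigenvectorUnitary : Matrix (Fin n) (Fin n) ℝ)
  have hU : U ∈ unitary _ := hW.eigenvectorUnitary.2
  have hV : V ∈ unitary _ := hW'.eigenvectorUnitary.2
  have hconj : ∀ A, frobNorm A = frobNorm (star U * A * V) := fun A =>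
    (frobNorm_mul_mul_of_mem_unitary (Unitary.star_mem hU) hV A).symm
  rw [hconj, hconj (W - W'), hW.cfc_eq_mul_diagonal_mul, hW'.cfc_eq_mul_diagonal_mul,
    star_mul_conj_sub_conj_mul hU hV]
  conv_rhs =>
    rw [hW.eq_mul_diagonal_mul, hW'.eq_mul_diagonal_mul, star_mul_conj_sub_conj_mul hU hV]
  refine frobNorm_le_frobNorm_of_abs_le fun i j => ?_
  simp only [diagonal_mul_sub_mul_diagonal_apply, Function.comp_apply, abs_mul]
  refine mul_le_mul_of_nonneg_right ?_ (abs_nonneg _)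
  simpa [Real.dist_eq] using hf.dist_le_mul (hW.eigenvalues i) (hW'.eigenvalues j)

theorem frobNorm_cfc_sub_cfc_le_sqrt_mul {f g : ℝ → ℝ} {c : ℝ} (hfg : ∀ t, |f t - g t| ≤ c) :
    frobNorm (hW.cfc f - hW.cfc g) ≤ √n * c := by
  have hc : 0 ≤ c := (abs_nonneg _).trans (hfg 0)
  have hU := hW.eigenvectorUnitary.2
  rw [hW.cfc_sub_cfc, hW.cfc_eq_mul_diagonal_mul,
    frobNorm_mul_mul_of_mem_unitary hU (Unitary.star_mem hU), frobNorm_diagonal]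
  calc √(∑ i, ((f - g) ∘ hW.eigenvalues) i ^ 2) ≤ √(∑ _i : Fin n, c ^ 2) := by
        refine Real.sqrt_le_sqrt (Finset.sum_le_sum fun i _ => ?_)
        rw [sq_le_sq, abs_of_nonneg hc]
        exact hfg _
    _ = √n * c := by simp [Real.sqrt_mul, hc]

end Lipschitz

theorem Phi_lipschitz_general {n : ℕ} (ε ε' : ℝ)
    (W W' : Matrix (Fin n) (Fin n) ℝ) (hW : W.IsHermitian) (hW' : W'.IsHermitian) :
    frobNorm (Phi ε hW - Phi ε' hW') ≤
      frobNorm (W - W') + (Real.sqrt n / 2) * |ε - ε'| := by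
  have hε : frobNorm (Phi ε hW - Phi ε' hW) ≤ √n * (|ε - ε'| / 2) :=
    frobNorm_cfc_sub_cfc_le_sqrt_mul hW (abs_huber_sub_huber_le ε ε')
  have hW_W' : frobNorm (Phi ε' hW - Phi ε' hW') ≤ frobNorm (W - W') :=
    frobNorm_cfc_sub_cfc_le hW hW' (lipschitzWith_huber ε')
  calc frobNorm (Phi ε hW - Phi ε' hW')
      ≤ frobNorm (Phi ε hW - Phi ε' hW) + frobNorm (Phi ε' hW - Phi ε' hW') :=
        frobNorm_sub_le _ _ _
    _ ≤ frobNorm (W - W') + √n / 2 * |ε - ε'| := by linarith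

/-- `‖Φ(ε,W) − Φ(ε',W')‖_F ≤ ‖W − W'‖_F + (√n/2)·|ε − ε'|`; in particular `Φ` is globally,
hence locally, Lipschitz continuous on `ℝ × Sⁿ`. -/
theorem Phi_lipschitz {n : ℕ} (hn : 0 < n) (ε ε' : ℝ)
    (W W' : Matrix (Fin n) (Fin n) ℝ) (hW : W.IsHermitian) (hW' : W'.IsHermitian) :
    frobNorm (Phi ε hW - Phi ε' hW') ≤
      frobNorm (W - W') + (Real.sqrt n / 2) * |ε - ε'| :=
  Phi_lipschitz_general ε ε' W W' hW hW'
end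

section
/- Let ν > 0. For all real symmetric n×n matrices X and Z: X = Π(X − Z) if and only if X = Π(X − ν·Z). -/
/-!
`x = a⁺` holds exactly when `x ≥ 0`, `x - a ≥ 0` and `x (x - a) = 0`, by uniqueness of the
decomposition of a selfadjoint element into orthogonal positive and negative parts.
For `a = x - z` the last two conditions read `z ≥ 0` and `x z = 0`, and both are invariant
under `z ↦ ν • z` for `ν > 0`.
-/

open Matrix

/-- Real scalar multiples of real symmetric matrices are symmetric. -/
theorem isHermitian_smul_real {n : ℕ} {Z : Matrix (Fin n) (Fin n) ℝ}
    (hZ : Z.IsHermitian) (ν : ℝ) : (ν • Z).IsHermitian := by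
  have h : (ν • Z)ᴴ = ν • Zᴴ := by
    ext i j; simp [Matrix.conjTranspose_apply]
  rw [Matrix.IsHermitian, h, hZ]

/-- The projection onto the PSD cone, `Π(W) = (t ↦ max(t,0))[W]`, via the primary matrix
function (Mathlib's `Matrix.IsHermitian.cfc`). -/
noncomputable def PiPSD {n : ℕ} {W : Matrix (Fin n) (Fin n) ℝ}
    (hW : W.IsHermitian) : Matrix (Fin n) (Fin n) ℝ :=
  hW.cfc (fun t => max t 0)

namespace CFC

variable {A : Type*} [NonUnitalRing A] [Module ℝ A] [SMulCommClass ℝ A A] [IsScalarTower ℝ A A]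
  [StarRing A] [TopologicalSpace A] [NonUnitalContinuousFunctionalCalculus ℝ A IsSelfAdjoint]
  [PartialOrder A] [StarOrderedRing A] [NonnegSpectrumClass ℝ A] [IsSemitopologicalRing A]
  [T2Space A]

theorem eq_posPart_iff {a x : A} (ha : IsSelfAdjoint a) :
    x = a⁺ ↔ 0 ≤ x ∧ 0 ≤ x - a ∧ x * (x - a) = 0 := by
  constructor
  · rintro rfl
    have hneg : a⁺ - a = a⁻ := by
      rw [sub_eq_iff_eq_add', ← sub_eq_iff_eq_add, posPart_sub_negPart a]
    exact ⟨posPart_nonneg a, hneg ▸ negPart_nonneg a, hneg ▸ posPart_mul_negPart a⟩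
  · rintro ⟨hx, hxa, hmul⟩
    exact (posPart_negPart_unique (sub_sub_cancel x a).symm hmul).1.symm

theorem eq_posPart_sub_iff_eq_posPart_sub_smul [StarModule ℝ A] {x z : A}
    (hx : IsSelfAdjoint x) (hz : IsSelfAdjoint z) {ν : ℝ} (hν : 0 < ν) :
    x = (x - z)⁺ ↔ x = (x - ν • z)⁺ := by
  rw [eq_posPart_iff (hx.sub hz), eq_posPart_iff (hx.sub ((IsSelfAdjoint.all ν).smul hz)),
    sub_sub_cancel, sub_sub_cancel, smul_nonneg_iff_nonneg_of_pos_left hν, mul_smul_comm,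
    smul_eq_zero_iff_right hν.ne']

end CFC

theorem PiPSD_eq_posPart {n : ℕ} {W : Matrix (Fin n) (Fin n) ℝ} (hW : W.IsHermitian) :
    PiPSD hW = W⁺ := by
  rw [PiPSD, ← hW.cfc_eq, CFC.posPart_def, cfcₙ_eq_cfc]
  rfl

open scoped MatrixOrder

theorem proj_scaling_invariance_general {n : ℕ} (ν : ℝ) (hν : 0 < ν)
    (X Z : Matrix (Fin n) (Fin n) ℝ) (hX : X.IsHermitian) (hZ : Z.IsHermitian) :
    X = PiPSD (hX.sub hZ) ↔ X = PiPSD (hX.sub (isHermitian_smul_real hZ ν)) := by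
  rw [PiPSD_eq_posPart, PiPSD_eq_posPart]
  exact CFC.eq_posPart_sub_iff_eq_posPart_sub_smul hX hZ hν

/-- For `ν > 0` and symmetric `X`, `Z`: `X = Π(X − Z)` iff `X = Π(X − ν·Z)`. -/
theorem proj_scaling_invariance {n : ℕ} (hn : 0 < n) (ν : ℝ) (hν : 0 < ν)
    (X Z : Matrix (Fin n) (Fin n) ℝ) (hX : X.IsHermitian) (hZ : Z.IsHermitian) :
    X = PiPSD (hX.sub hZ) ↔ X = PiPSD (hX.sub (isHermitian_smul_real hZ ν)) :=
  proj_scaling_invariance_general ν hν X Z hX hZ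
end
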